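/- arXiv:1409.5401 — 3 statements merged into one kernel-verified Lean document; each statement's English description precedes it below -/
import Mathlib

section
/- Under the failed-link setup (link ε̄ = (ν_j, ν_i) fails at time t_f, only row i of A is perturbed to Ā with ā_{ij} = 0), for every k ≤ dist(G; ν_j, ν_p) the jump of the k-th derivative of the output of node ν_p satisfies: Δ_{t_f}(p,k) = c_{i,j,p} if k = dist(G; ν_i, ν_p) + 1, and Δ_{t_f}(p,k) = 0 if k < dist(G; ν_i, ν_p) + 1, where c_{i,j,p} = Φ(Ω^{k−1}(G; ν_i, ν_p), A) · Σ_{q=1}^{n} (ā_{iq} − a_{iq}) x_q(t_f). -/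
open Finset

/-- The finite set of walks of length `k` from `q` to `p` in the digraph on `Fin n`
with edge set `E`, encoded as vertex sequences `f : Fin (k+1) → Fin n`. -/
def walks (n : ℕ) (E : Finset (Fin n × Fin n)) (k : ℕ) (q p : Fin n) :
    Finset (Fin (k + 1) → Fin n) :=
  Finset.univ.filter fun f : Fin (k + 1) → Fin n =>
    (∀ i : Fin k, (f i.castSucc, f i.succ) ∈ E) ∧ f 0 = q ∧ f (Fin.last k) = p

/-- Walks of length `k` from `q` to `p` whose first edge is `(q, r)`. -/
def walksThrough (n : ℕ) (E : Finset (Fin n × Fin n)) (k : ℕ) (q r p : Fin n) :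
    Finset (Fin (k + 1) → Fin n) :=
  (walks n E k q p).filter fun f => f 1 = r

/-- Weight of a walk w.r.t. an in-weighting `A`: each edge `(u, v)` contributes `A v u`. -/
def walkWeight {n k : ℕ} (A : Matrix (Fin n) (Fin n) ℝ) (f : Fin (k + 1) → Fin n) : ℝ :=
  ∏ i : Fin k, A (f i.succ) (f i.castSucc)

/-- `Φ(Ω, A)`: sum of the weights of the walks in `Ω` w.r.t. `A`. -/
def phi {n k : ℕ} (A : Matrix (Fin n) (Fin n) ℝ) (Ω : Finset (Fin (k + 1) → Fin n)) : ℝ :=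
  ∑ f ∈ Ω, walkWeight A f

/-- Distance from `q` to `p` in the digraph: the least length of a walk, `⊤` if none. -/
noncomputable def gdist (n : ℕ) (E : Finset (Fin n × Fin n)) (q p : Fin n) : ℕ∞ :=
  ⨅ m ∈ {m : ℕ | (walks n E m q p).Nonempty}, (m : ℕ∞)

/-- Diameter of the digraph. -/
noncomputable def gdiam (n : ℕ) (E : Finset (Fin n × Fin n)) : ℕ∞ :=
  ⨆ q : Fin n, ⨆ p : Fin n, gdist n E q p

/-- `A` is an in-weighting on the digraph with edge set `E`. -/
def IsInWeighting {n : ℕ} (E : Finset (Fin n × Fin n))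
    (A : Matrix (Fin n) (Fin n) ℝ) : Prop :=
  ∀ p q : Fin n, (q, p) ∉ E → A p q = 0

/-- `Δ_{t_f}(p, k)`: jump of the `k`-th one-sided derivatives of `x_p` at `t_f`. -/
noncomputable def jump {n : ℕ} (x : ℝ → Fin n → ℝ) (tf : ℝ) (p : Fin n) (k : ℕ) : ℝ :=
  iteratedDerivWithin k (fun t => x t p) (Set.Ici tf) tf
    - iteratedDerivWithin k (fun t => x t p) (Set.Iic tf) tf

/-!
On either side of `tf` the `k`-th one-sided derivative of `x` is read off the ODE: it is
`g_k(tf)` for the recursion `g_0 = x`, `g_{r+1} = M g_r + B w⁽ʳ⁾` with `M = A` before and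
`M = Ā` after the failure (at `tf⁺` through the continuity of `x` and the derivative-limit
theorem). The difference `D_r = ḡ_r - g_r` obeys `D_{r+1} = A D_r + (Ā - A) ḡ_r`, and `Ā - A`
lives in row `i`, so `D_k(p) = Σ_{a<k} (A^a)_{p i} c_{k-1-a}` with
`c_s = Σ_q (ā_{iq} - a_{iq}) ḡ_s(q)`. Now `(A^a)_{p i}` is the total weight of the walks of
length `a` from `i` to `p`, which vanishes for `a < dist(i, p)`; for `k ≤ dist(i, p) + 1` only
the term `a = k - 1 = dist(i, p)` can survive, and there `ḡ_0 = x`.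
-/

open Matrix Topology

lemma walkWeight_snoc {n k : ℕ} (A : Matrix (Fin n) (Fin n) ℝ) (h : Fin (k + 1) → Fin n)
    (v : Fin n) :
    walkWeight A (Fin.snoc h v : Fin (k + 2) → Fin n) = A v (h (Fin.last k)) * walkWeight A h := by
  simp [walkWeight, Fin.prod_univ_castSucc, Fin.succ_castSucc, -Fin.castSucc_succ, mul_comm]

lemma sum_walkWeight_eq_pow {n : ℕ} (A : Matrix (Fin n) (Fin n) ℝ) (k : ℕ) (q p : Fin n) :
    ∑ f : Fin (k + 1) → Fin n with f 0 = q ∧ f (Fin.last k) = p, walkWeight A f = (A ^ k) p q := by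
  induction k generalizing p with
  | zero =>
    rw [pow_zero, Matrix.one_apply, Finset.sum_filter,
      ← (Equiv.funUnique (Fin 1) (Fin n)).symm.sum_comp]
    split_ifs with h <;> simp [walkWeight, h, Ne.symm]
  | succ k ih =>
    calc ∑ f : Fin (k + 2) → Fin n with f 0 = q ∧ f (Fin.last (k + 1)) = p, walkWeight A f
        = ∑ h : Fin (k + 1) → Fin n with h 0 = q, A p (h (Fin.last k)) * walkWeight A h := by
          rw [Finset.sum_filter, Finset.sum_filter,
            ← (Fin.snocEquiv fun _ => Fin n).sum_comp, Fintype.sum_prod_type, Finset.sum_comm]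
          simp [Fin.snocEquiv, walkWeight_snoc, and_comm, ite_and]
      _ = ∑ r, ∑ h : Fin (k + 1) → Fin n with h 0 = q ∧ h (Fin.last k) = r,
            A p r * walkWeight A h := by
          rw [← Finset.sum_fiberwise _ (fun h => h (Fin.last k))]
          refine Finset.sum_congr rfl fun r _ => ?_
          rw [Finset.filter_filter]
          exact Finset.sum_congr rfl fun h hh => by rw [(Finset.mem_filter.1 hh).2.2]
      _ = (A ^ (k + 1)) p q := by
          simp_rw [← Finset.mul_sum, ih, pow_succ', Matrix.mul_apply]

lemma phi_walks_eq_pow {n : ℕ} {E : Finset (Fin n × Fin n)} {A : Matrix (Fin n) (Fin n) ℝ}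
    (hA : IsInWeighting E A) (k : ℕ) (q p : Fin n) :
    phi A (walks n E k q p) = (A ^ k) p q := by
  rw [← sum_walkWeight_eq_pow]
  refine Finset.sum_subset (fun f hf => ?_) (fun f hf hfE => ?_)
  · simp only [walks, mem_filter] at hf ⊢
    exact ⟨hf.1, hf.2.2⟩
  · simp only [walks, mem_filter, mem_univ, true_and] at hf hfE
    obtain ⟨e, he⟩ := not_forall.1 fun hE => hfE ⟨hE, hf⟩
    exact Finset.prod_eq_zero (mem_univ e) (hA _ _ he)

lemma walks_eq_empty_of_lt_gdist {n : ℕ} {E : Finset (Fin n × Fin n)} {k : ℕ} {q p : Fin n}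
    (h : (k : ℕ∞) < gdist n E q p) : walks n E k q p = ∅ :=
  Finset.not_nonempty_iff_eq_empty.1 fun hne => h.not_ge (iInf₂_le k hne)

lemma pow_apply_eq_zero_of_lt_gdist {n : ℕ} {E : Finset (Fin n × Fin n)}
    {A : Matrix (Fin n) (Fin n) ℝ} (hA : IsInWeighting E A) {k : ℕ} {q p : Fin n}
    (h : (k : ℕ∞) < gdist n E q p) : (A ^ k) p q = 0 := by
  rw [← phi_walks_eq_pow hA, walks_eq_empty_of_lt_gdist h, phi, sum_empty]

lemma HasDerivWithinAt.matrix_mulVec {m n : ℕ} {f : ℝ → Fin n → ℝ} {f' : Fin n → ℝ}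
    {s : Set ℝ} {t : ℝ} (M : Matrix (Fin m) (Fin n) ℝ) (hf : HasDerivWithinAt f f' s t) :
    HasDerivWithinAt (fun u => M *ᵥ f u) (M *ᵥ f') s t :=
  (LinearMap.toContinuousLinearMap (Matrix.mulVecLin M)).hasFDerivAt.comp_hasDerivWithinAt t hf

lemma hasDerivWithinAt_Ici_of_hasDerivAt_Ioi {F : Type*} [NormedAddCommGroup F]
    [NormedSpace ℝ F] {f f' : ℝ → F} {a : ℝ} (hf : ContinuousWithinAt f (Set.Ici a) a)
    (hderiv : ∀ t ∈ Set.Ioi a, HasDerivAt f (f' t) t)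
    (hf' : ContinuousWithinAt f' (Set.Ioi a) a) :
    ∀ t ∈ Set.Ici a, HasDerivWithinAt f (f' t) (Set.Ici a) t := by
  intro t ht
  obtain rfl | hlt := (Set.mem_Ici.1 ht).eq_or_lt
  · refine hasDerivWithinAt_Ici_of_tendsto_deriv
      (fun u hu => (hderiv u hu).differentiableAt.differentiableWithinAt)
      (hf.mono Set.Ioi_subset_Ici_self) self_mem_nhdsWithin ?_
    exact hf'.tendsto.congr' (eventually_nhdsWithin_of_forall fun u hu => (hderiv u hu).deriv.symm)
  · exact (hderiv t hlt).hasDerivWithinAt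

/-- The `r`-th derivative of a solution of `ẋ = M x + B w`, written through `x` and the
derivatives of `w`. -/
noncomputable def ltiDeriv {n m : ℕ} (M : Matrix (Fin n) (Fin n) ℝ) (B : Matrix (Fin n) (Fin m) ℝ)
    (x : ℝ → Fin n → ℝ) (w : ℝ → Fin m → ℝ) : ℕ → ℝ → Fin n → ℝ
  | 0 => x
  | r + 1 => fun t => M *ᵥ ltiDeriv M B x w r t + B *ᵥ iteratedDeriv r w t

section LinearSystem

variable {n m K : ℕ} {M : Matrix (Fin n) (Fin n) ℝ} {B : Matrix (Fin n) (Fin m) ℝ}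
  {x : ℝ → Fin n → ℝ} {w : ℝ → Fin m → ℝ} {s s' : Set ℝ}

lemma hasDerivWithinAt_ltiDeriv
    (hx : ∀ t ∈ s', HasDerivWithinAt x (M *ᵥ x t + B *ᵥ w t) s t) (hw : ContDiff ℝ K w) :
    ∀ r < K, ∀ t ∈ s',
      HasDerivWithinAt (ltiDeriv M B x w r) (ltiDeriv M B x w (r + 1) t) s t := by
  intro r
  induction r with
  | zero => exact fun _ => hx
  | succ r ih =>
    intro hr t ht
    have hwr : HasDerivAt (iteratedDeriv r w) (iteratedDeriv (r + 1) w t) t := by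
      rw [iteratedDeriv_succ]
      have hrK : (r : WithTop ℕ∞) < K := by exact_mod_cast hr.trans' r.lt_succ_self
      exact (hw.differentiable_iteratedDeriv r hrK t).hasDerivAt
    exact (HasDerivWithinAt.matrix_mulVec M (ih (by omega) t ht)).add
      (HasDerivWithinAt.matrix_mulVec B hwr.hasDerivWithinAt)

lemma iteratedDerivWithin_eq_ltiDeriv (hs : UniqueDiffOn ℝ s) (hs's : s' ⊆ s)
    (hs' : ∀ t ∈ s', s' ∈ 𝓝[s] t)
    (hx : ∀ t ∈ s', HasDerivWithinAt x (M *ᵥ x t + B *ᵥ w t) s t) (hw : ContDiff ℝ K w) :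
    ∀ r ≤ K, ∀ t ∈ s', ∀ p : Fin n,
      iteratedDerivWithin r (fun u => x u p) s t = ltiDeriv M B x w r t p := by
  intro r
  induction r with
  | zero => intro _ t _ p; rfl
  | succ r ih =>
    intro hr t ht p
    have hderiv : HasDerivWithinAt (fun u => ltiDeriv M B x w r u p)
        (ltiDeriv M B x w (r + 1) t p) s t :=
      hasDerivWithinAt_pi.1 (hasDerivWithinAt_ltiDeriv hx hw r hr t ht) p
    have heq : iteratedDerivWithin r (fun u => x u p) s =ᶠ[𝓝[s] t]
        fun u => ltiDeriv M B x w r u p :=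
      Filter.eventually_of_mem (hs' t ht) fun u hu => ih (by omega) u hu p
    rw [iteratedDerivWithin_succ, heq.derivWithin_eq (ih (by omega) t ht p)]
    exact hderiv.derivWithin (hs t (hs's ht))

lemma ltiDeriv_sub_ltiDeriv (N : Matrix (Fin n) (Fin n) ℝ) (t : ℝ) (r : ℕ) :
    ltiDeriv N B x w r t - ltiDeriv M B x w r t =
      ∑ a ∈ range r, (M ^ a * (N - M)) *ᵥ ltiDeriv N B x w (r - 1 - a) t := by
  induction r with
  | zero => simp [ltiDeriv]
  | succ r ih =>
    have hstep : ltiDeriv N B x w (r + 1) t - ltiDeriv M B x w (r + 1) t =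
        M *ᵥ (ltiDeriv N B x w r t - ltiDeriv M B x w r t) + (N - M) *ᵥ ltiDeriv N B x w r t := by
      simp only [ltiDeriv, Matrix.mulVec_sub, Matrix.sub_mulVec]
      abel
    rw [hstep, ih, Matrix.mulVec_sum, sum_range_succ']
    simp [Matrix.mulVec_mulVec, pow_succ', mul_assoc, Nat.sub_sub, add_comm 1]

end LinearSystem

lemma mul_sub_mulVec_apply_of_rows_eq {n : ℕ} {M N : Matrix (Fin n) (Fin n) ℝ} {i : Fin n}
    (hrow : ∀ q r : Fin n, q ≠ i → N q r = M q r) (P : Matrix (Fin n) (Fin n) ℝ)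
    (v : Fin n → ℝ) (p : Fin n) :
    ((P * (N - M)) *ᵥ v) p = P p i * ∑ q : Fin n, (N i q - M i q) * v q := by
  have hsingle : (N - M) *ᵥ v = Pi.single i (∑ q : Fin n, (N i q - M i q) * v q) := by
    ext q
    obtain rfl | hq := eq_or_ne q i
    · simp [Matrix.mulVec, dotProduct]
    · simp [Matrix.mulVec, dotProduct, hq, hrow q _ hq]
  rw [← Matrix.mulVec_mulVec, hsingle, Matrix.mulVec_single]
  simp [mul_comm]

section Jump

variable {n m k : ℕ} {A Abar : Matrix (Fin n) (Fin n) ℝ} {B : Matrix (Fin n) (Fin m) ℝ}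
  {x : ℝ → Fin n → ℝ} {w : ℝ → Fin m → ℝ} {t0 tf : ℝ}

lemma jump_eq_ltiDeriv_sub (ht : t0 < tf) (hw : ContDiff ℝ k w) (hcont : ContinuousAt x tf)
    (hpre : ∀ t ∈ Set.Ioc t0 tf, HasDerivWithinAt x (A *ᵥ x t + B *ᵥ w t) (Set.Iic tf) t)
    (hpost : ∀ t ∈ Set.Ioi tf, HasDerivAt x (Abar *ᵥ x t + B *ᵥ w t) t) (p : Fin n) :
    jump x tf p k = ltiDeriv Abar B x w k tf p - ltiDeriv A B x w k tf p := by
  have hpost' : ∀ t ∈ Set.Ici tf,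
      HasDerivWithinAt x (Abar *ᵥ x t + B *ᵥ w t) (Set.Ici tf) t := by
    refine hasDerivWithinAt_Ici_of_hasDerivAt_Ioi hcont.continuousWithinAt hpost
      (ContinuousAt.continuousWithinAt ?_)
    exact ((continuous_const.matrix_mulVec continuous_id).continuousAt.comp hcont).add
      (continuous_const.matrix_mulVec hw.continuous).continuousAt
  have hleft := iteratedDerivWithin_eq_ltiDeriv (uniqueDiffOn_Iic tf) Set.Ioc_subset_Iic_self
    (fun t ht' => by
      rw [← Set.Ioi_inter_Iic, Set.inter_comm]
      exact inter_mem_nhdsWithin _ (Ioi_mem_nhds ht'.1))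
    hpre hw k le_rfl tf ⟨ht, le_rfl⟩ p
  have hright := iteratedDerivWithin_eq_ltiDeriv (uniqueDiffOn_Ici tf) subset_rfl
    (fun _ _ => self_mem_nhdsWithin) hpost' hw k le_rfl tf Set.self_mem_Ici p
  rw [jump, hleft, hright]

lemma jump_eq_sum_pow {i : Fin n} (hrow : ∀ q r : Fin n, q ≠ i → Abar q r = A q r)
    (ht : t0 < tf) (hw : ContDiff ℝ k w) (hcont : ContinuousAt x tf)
    (hpre : ∀ t ∈ Set.Ioc t0 tf, HasDerivWithinAt x (A *ᵥ x t + B *ᵥ w t) (Set.Iic tf) t)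
    (hpost : ∀ t ∈ Set.Ioi tf, HasDerivAt x (Abar *ᵥ x t + B *ᵥ w t) t) (p : Fin n) :
    jump x tf p k = ∑ a ∈ range k,
      (A ^ a) p i * ∑ q : Fin n, (Abar i q - A i q) * ltiDeriv Abar B x w (k - 1 - a) tf q := by
  rw [jump_eq_ltiDeriv_sub ht hw hcont hpre hpost, ← Pi.sub_apply, ltiDeriv_sub_ltiDeriv,
    Finset.sum_apply]
  exact Finset.sum_congr rfl fun a _ => mul_sub_mulVec_apply_of_rows_eq hrow _ _ _

end Jump

theorem link_failure_jump_corollary_general {n m : ℕ} (E : Finset (Fin n × Fin n))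
    (A Abar : Matrix (Fin n) (Fin n) ℝ) (B : Matrix (Fin n) (Fin m) ℝ)
    (j i p : Fin n)
    (hA : IsInWeighting E A)
    (hrow : ∀ q r : Fin n, q ≠ i → Abar q r = A q r)
    (x : ℝ → Fin n → ℝ) (w : ℝ → Fin m → ℝ) (t0 tf : ℝ) (ht : t0 < tf)
    (hw : ContDiff ℝ (gdiam n E + 1) w)
    (hcont : ContinuousAt x tf)
    (hpre : ∀ t ∈ Set.Ioc t0 tf,
      HasDerivWithinAt x (A.mulVec (x t) + B.mulVec (w t)) (Set.Iic tf) t)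
    (hpost : ∀ t ∈ Set.Ioi tf,
      HasDerivAt x (Abar.mulVec (x t) + B.mulVec (w t)) t) :
    ∀ k : ℕ, (k : ℕ∞) ≤ gdist n E j p →
      (((k : ℕ∞) = gdist n E i p + 1 →
          jump x tf p k =
            phi A (walks n E (k - 1) i p) * ∑ q : Fin n, (Abar i q - A i q) * x tf q)
        ∧ ((k : ℕ∞) < gdist n E i p + 1 → jump x tf p k = 0)) := by
  intro k hk
  have hdiam : gdist n E j p ≤ gdiam n E := le_iSup₂ (f := fun q p => gdist n E q p) j p
  have hwk : ContDiff ℝ k w := hw.of_le (by exact_mod_cast (hk.trans hdiam).trans le_self_add)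
  rw [jump_eq_sum_pow hrow ht hwk hcont hpre hpost]
  refine ⟨fun hkeq => ?_, fun hlt => ?_⟩
  · obtain ⟨d, hd⟩ : ∃ d : ℕ, (d : ℕ∞) = gdist n E i p :=
      ENat.ne_top_iff_exists.1 fun htop => by simp [htop] at hkeq
    obtain rfl : k = d + 1 := by rw [← hd] at hkeq; exact_mod_cast hkeq
    rw [sum_range_succ, sum_eq_zero fun a ha => by
      rw [pow_apply_eq_zero_of_lt_gdist hA (hd ▸ by exact_mod_cast mem_range.1 ha), zero_mul],
      zero_add, phi_walks_eq_pow hA]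
    simp [ltiDeriv]
  · have hkle : (k : ℕ∞) ≤ gdist n E i p := (ENat.lt_add_one_iff' (ENat.natCast_ne_top k)).1 hlt
    exact sum_eq_zero fun a ha => by
      rw [pow_apply_eq_zero_of_lt_gdist hA ((Nat.cast_lt.2 (mem_range.1 ha)).trans_le hkle),
        zero_mul]

/-- Corollary 1: under the failed-link setup, for every
`k ≤ dist(G; j, p)` the jump of the `k`-th derivative of the output of node `p`
equals `c_{i,j,p} = Φ(Ω^{k-1}(G; i, p), A) · Σ_q (ā_{iq} - a_{iq}) x_q(tf)` when
`k = dist(G; i, p) + 1`, and vanishes when `k < dist(G; i, p) + 1`. -/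
theorem link_failure_jump_corollary {n m : ℕ} (E : Finset (Fin n × Fin n))
    (A Abar : Matrix (Fin n) (Fin n) ℝ) (B : Matrix (Fin n) (Fin m) ℝ)
    (j i p : Fin n) (hE : (j, i) ∈ E)
    (hA : IsInWeighting E A)
    (hAbar : IsInWeighting (E.erase (j, i)) Abar)
    (hij : Abar i j = 0)
    (hrow : ∀ q r : Fin n, q ≠ i → Abar q r = A q r)
    (x : ℝ → Fin n → ℝ) (w : ℝ → Fin m → ℝ) (t0 tf : ℝ) (ht : t0 < tf)
    (hw : ContDiff ℝ (gdiam n E + 1) w)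
    (hcont : ContinuousAt x tf)
    (hpre : ∀ t ∈ Set.Ioc t0 tf,
      HasDerivWithinAt x (A.mulVec (x t) + B.mulVec (w t)) (Set.Iic tf) t)
    (hpost : ∀ t ∈ Set.Ioi tf,
      HasDerivAt x (Abar.mulVec (x t) + B.mulVec (w t)) t) :
    ∀ k : ℕ, (k : ℕ∞) ≤ gdist n E j p →
      (((k : ℕ∞) = gdist n E i p + 1 →
          jump x tf p k =
            phi A (walks n E (k - 1) i p) * ∑ q : Fin n, (Abar i q - A i q) * x tf q)
        ∧ ((k : ℕ∞) < gdist n E i p + 1 → jump x tf p k = 0)) :=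
  link_failure_jump_corollary_general E A Abar B j i p hA hrow x w t0 tf ht hw hcont hpre hpost
end

section
/- Let G = (V,E) be a digraph with (ν_j, ν_i) ∈ E, let ν_p, ν_q be vertices, and let m ∈ ℕ with m ≤ dist(G; ν_j, ν_p). Then in any walk W of length m from ν_q to ν_p in G, every edge of W whose head is ν_i occurs only as the first edge of W; in particular, if W contains an edge of the form (ν_γ, ν_i) for some vertex ν_γ, then the first edge of W is (ν_q, ν_i). -/
open Finset

/-
An edge `(f t, f (t+1)) = (·, i)` with `t ≥ 1` would let us replace the first `t + 1` edges of
the walk by the single edge `(j, i)`, producing a walk from `j` to `p` of length `m - t < m`,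
against `m ≤ dist(j, p)`.
-/

section Walks

variable {n : ℕ} {E : Finset (Fin n × Fin n)}

theorem mem_walks_iff {k : ℕ} {q p : Fin n} {f : Fin (k + 1) → Fin n} :
    f ∈ walks n E k q p ↔
      (∀ i : Fin k, (f i.castSucc, f i.succ) ∈ E) ∧ f 0 = q ∧ f (Fin.last k) = p := by
  simp [walks]

theorem gdist_le_of_mem_walks {k : ℕ} {q p : Fin n} {f : Fin (k + 1) → Fin n}
    (hf : f ∈ walks n E k q p) : gdist n E q p ≤ k :=
  iInf₂_le k ⟨f, hf⟩

theorem cons_mem_walks {k : ℕ} {j r p : Fin n} {f : Fin (k + 1) → Fin n}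
    (hf : f ∈ walks n E k r p) (hE : (j, r) ∈ E) :
    (Fin.cons j f : Fin (k + 2) → Fin n) ∈ walks n E (k + 1) j p := by
  obtain ⟨hedges, hr, hp⟩ := mem_walks_iff.mp hf
  refine mem_walks_iff.mpr ⟨fun i => ?_, Fin.cons_zero _ _, ?_⟩
  · cases i using Fin.cases with
    | zero => simpa [hr] using hE
    | succ i => simpa [← Fin.succ_castSucc] using hedges i
  · rw [← Fin.succ_last, Fin.cons_succ, hp]

theorem drop_mem_walks {k : ℕ} {q p : Fin n} {f : Fin (k + 1) → Fin n}
    (hf : f ∈ walks n E k q p) (s : ℕ) (hs : s ≤ k) :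
    (fun x : Fin (k - s + 1) => f ⟨s + x, by omega⟩) ∈ walks n E (k - s) (f ⟨s, by omega⟩) p := by
  obtain ⟨hedges, -, hp⟩ := mem_walks_iff.mp hf
  refine mem_walks_iff.mpr ⟨fun i => ?_, rfl, ?_⟩
  · convert hedges ⟨s + i, by omega⟩ using 3 <;> ext <;> simp [add_assoc]
  · rw [← hp]
    congr 1
    ext
    simp only [Fin.val_last]
    omega

end Walks

/-- let `(j, i) ∈ E` and `m ≤ dist(G; j, p)`.  In any walk of
length `m` from `q` to `p`, an edge whose head is `i` can only occur as the first
edge of the walk (hence such an edge must be `(q, i)`). -/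
theorem edge_into_head_only_first {n : ℕ} (E : Finset (Fin n × Fin n))
    (j i p q : Fin n) (hE : (j, i) ∈ E)
    (m : ℕ) (hm : (m : ℕ∞) ≤ gdist n E j p)
    (f : Fin (m + 1) → Fin n) (hf : f ∈ walks n E m q p) :
    ∀ t : Fin m, f t.succ = i → (t : ℕ) = 0 := by
  intro t ht
  have htail := drop_mem_walks hf (t + 1) t.isLt
  have hshortcut := cons_mem_walks (ht ▸ htail) hE
  have hdist : (m : ℕ∞) ≤ (m - (t + 1) + 1 : ℕ) := hm.trans (gdist_le_of_mem_walks hshortcut)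
  have hlen : m ≤ m - (t + 1) + 1 := by exact_mod_cast hdist
  omega
end

section
/- Let A be an in-weighting on a digraph G = (V,E) with (ν_j, ν_i) ∈ E, and let Ā be an in-weighting on Ḡ = (V, E∖{(ν_j, ν_i)}) with ā_{ij} = 0 and ā_{qr} = a_{qr} for all q ≠ i and all r. Then for every vertex ν_p, all q ∈ {1,…,n}, and every m ∈ ℕ with 1 ≤ m ≤ dist(G; ν_j, ν_p): [Ā^m]_{pq} − [A^m]_{pq} = (ā_{iq} − a_{iq}) · [A^{m−1}]_{pi}. -/
open Finset

/-! The proof is an induction on `m` along the rows of `Ā^m − A^m`. For `p ≠ i` the rows `p`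
of `Ā` and `A` agree, so row `p` of `Ā^{m+1} − A^{m+1}` is row `p` of `A` applied to
`Ā^m − A^m`; and `p ≠ i` is automatic once `m ≥ 2`, since `dist(j, i) ≤ 1`. Only the `r` with
`a_{pr} ≠ 0` contribute, and these are in-neighbours of `p`, so `dist(j, r) ≥ dist(j, p) − 1`
and the induction hypothesis applies to row `r`. -/

section

variable {n : ℕ} {E : Finset (Fin n × Fin n)}

lemma walks_one_nonempty {q p : Fin n} (h : (q, p) ∈ E) : (walks n E 1 q p).Nonempty := by
  refine ⟨![q, p], ?_⟩
  simp only [walks, mem_filter, mem_univ, true_and]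
  refine ⟨fun k => ?_, rfl, rfl⟩
  fin_cases k
  simpa using h

lemma walks_nonempty_snoc {k : ℕ} {q r p : Fin n} (hf : (walks n E k q r).Nonempty)
    (hrp : (r, p) ∈ E) : (walks n E (k + 1) q p).Nonempty := by
  obtain ⟨f, hf⟩ := hf
  simp only [walks, mem_filter, mem_univ, true_and] at hf
  obtain ⟨hedge, h0, hlast⟩ := hf
  refine ⟨Fin.snoc f p, mem_filter.mpr ⟨mem_univ _, fun l => ?_, ?_, Fin.snoc_last _ _⟩⟩
  · refine Fin.lastCases ?_ (fun l' => ?_) l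
    · simpa [Fin.succ_last, hlast] using hrp
    · simpa only [Fin.succ_castSucc, Fin.snoc_castSucc] using hedge l'
  · rw [← Fin.castSucc_zero, Fin.snoc_castSucc]
    exact h0

lemma gdist_le_of_walks_nonempty {k : ℕ} {q p : Fin n} (h : (walks n E k q p).Nonempty) :
    gdist n E q p ≤ k :=
  iInf₂_le k h

lemma gdist_le_one_of_mem {q p : Fin n} (h : (q, p) ∈ E) : gdist n E q p ≤ 1 := by
  exact_mod_cast gdist_le_of_walks_nonempty (walks_one_nonempty h)

lemma gdist_le_gdist_add_one_of_mem {q r p : Fin n} (h : (r, p) ∈ E) :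
    gdist n E q p ≤ gdist n E q r + 1 := by
  simp only [gdist, ENat.iInf_add]
  refine le_iInf₂ fun k hk => ?_
  exact_mod_cast gdist_le_of_walks_nonempty (walks_nonempty_snoc hk h)

lemma Matrix.pow_succ_apply_sub_pow_succ_apply_of_row_eq {ι R : Type*} [Fintype ι]
    [DecidableEq ι] [Ring R] {A B : Matrix ι ι R} {p : ι} (hp : B p = A p) (m : ℕ) (q : ι) :
    (B ^ (m + 1)) p q - (A ^ (m + 1)) p q = ∑ r, A p r * ((B ^ m) r q - (A ^ m) r q) := by
  simp only [pow_succ', Matrix.mul_apply, hp, mul_sub, sum_sub_distrib]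

lemma pow_succ_apply_sub_pow_succ_apply_of_le_gdist {A Abar : Matrix (Fin n) (Fin n) ℝ} {j i : Fin n}
    (hE : (j, i) ∈ E) (hA : IsInWeighting E A)
    (hrow : ∀ q r : Fin n, q ≠ i → Abar q r = A q r) (q : Fin n) (m : ℕ) :
    ∀ p : Fin n, ((m + 1 : ℕ) : ℕ∞) ≤ gdist n E j p →
      (Abar ^ (m + 1)) p q - (A ^ (m + 1)) p q = (Abar i q - A i q) * (A ^ m) p i := by
  induction m with
  | zero =>
    intro p _
    by_cases hpi : p = i
    · simp [hpi]
    · simp [hpi, hrow p q hpi]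
  | succ m ih =>
    intro p hp
    have hpi : p ≠ i := by
      rintro rfl
      have hle : ((m + 2 : ℕ) : ℕ∞) ≤ 1 := hp.trans (gdist_le_one_of_mem hE)
      norm_cast at hle
    have hdist : ∀ r, A p r ≠ 0 → ((m + 1 : ℕ) : ℕ∞) ≤ gdist n E j r := fun r hr => by
      have hrp : (r, p) ∈ E := by_contra fun h => hr (hA p r h)
      have := hp.trans (gdist_le_gdist_add_one_of_mem hrp)
      push_cast at this ⊢
      exact (ENat.add_le_add_iff_right ENat.one_ne_top).mp this
    calc (Abar ^ (m + 1 + 1)) p q - (A ^ (m + 1 + 1)) p q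
        = ∑ r, A p r * ((Abar ^ (m + 1)) r q - (A ^ (m + 1)) r q) :=
          Matrix.pow_succ_apply_sub_pow_succ_apply_of_row_eq (funext (hrow p · hpi)) _ q
      _ = ∑ r, A p r * ((Abar i q - A i q) * (A ^ m) r i) := by
          refine sum_congr rfl fun r _ => ?_
          by_cases hr : A p r = 0
          · simp [hr]
          · rw [ih r (hdist r hr)]
      _ = (Abar i q - A i q) * (A ^ (m + 1)) p i := by
          rw [pow_succ', Matrix.mul_apply, mul_sum]
          exact sum_congr rfl fun r _ => by ring

end

theorem pow_perturbation_formula_general {n : ℕ} (E : Finset (Fin n × Fin n))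
    (A Abar : Matrix (Fin n) (Fin n) ℝ)
    (j i p : Fin n) (hE : (j, i) ∈ E)
    (hA : IsInWeighting E A)
    (hrow : ∀ q r : Fin n, q ≠ i → Abar q r = A q r) :
    ∀ q : Fin n, ∀ m : ℕ, 1 ≤ m → (m : ℕ∞) ≤ gdist n E j p →
      (Abar ^ m) p q - (A ^ m) p q = (Abar i q - A i q) * (A ^ (m - 1)) p i := by
  rintro q (_ | m) hm hdist
  · omega
  · exact pow_succ_apply_sub_pow_succ_apply_of_le_gdist hE hA hrow q m p hdist

/-- under the failed-link setup, for `1 ≤ m ≤ dist(G; j, p)`: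
`[Ā^m]_{pq} - [A^m]_{pq} = (ā_{iq} - a_{iq}) · [A^{m-1}]_{pi}`. -/
theorem pow_perturbation_formula {n : ℕ} (E : Finset (Fin n × Fin n))
    (A Abar : Matrix (Fin n) (Fin n) ℝ)
    (j i p : Fin n) (hE : (j, i) ∈ E)
    (hA : IsInWeighting E A)
    (hAbar : IsInWeighting (E.erase (j, i)) Abar)
    (hij : Abar i j = 0)
    (hrow : ∀ q r : Fin n, q ≠ i → Abar q r = A q r) :
    ∀ q : Fin n, ∀ m : ℕ, 1 ≤ m → (m : ℕ∞) ≤ gdist n E j p →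
      (Abar ^ m) p q - (A ^ m) p q = (Abar i q - A i q) * (A ^ (m - 1)) p i :=
  pow_perturbation_formula_general E A Abar j i p hE hA hrow
end
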